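/- Let f : (0,∞) → [0,∞) be measurable with ∫_0^∞ √π · f(s²) ds = 1, and let φ : [0,∞) → [0,1] be continuous with φ(0) = 1, differentiable on (0,∞), and satisfying −φ'(u) = ∫_0^∞ e^{−r u²} f(r) dr for all u > 0. Then φ(t) = ∫_0^∞ erfc(s·t) · √π · f(s²) ds for all t ≥ 0. -/

import Mathlib

/-!
Integrating `-φ'` over `[0, t]` gives `1 - φ t = ∫₀ᵗ ∫₀^∞ e^{-r u²} f(r) dr du`. After the
substitution `r = s²` the integrand becomes `2 s e^{-(s u)²} f(s²)`, whose integral in `u` over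
`[0, t]` is `√π (1 - erfc (s t))`; since `0 ≤ 1 - erfc ≤ 1` on `[0, ∞)` and `s ↦ f(s²)` is
integrable, Fubini applies and `1 - φ t = ∫₀^∞ (1 - erfc (s t)) √π f(s²) ds`. The normalisation
`∫₀^∞ √π f(s²) ds = 1` turns this into the claim.
-/

open Real Set MeasureTheory

/-- The complementary error function `erfc x = (2/√π) ∫_x^∞ e^{-y²} dy`. -/
noncomputable def erfc (x : ℝ) : ℝ :=
  (2 / Real.sqrt Real.pi) * ∫ y in Set.Ioi x, Real.exp (-y ^ 2)

lemma integrable_exp_neg_sq : Integrable fun y : ℝ => exp (-y ^ 2) := by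
  simpa using integrable_exp_neg_mul_sq one_pos

lemma erfc_eq_one_sub_intervalIntegral (x : ℝ) :
    erfc x = 1 - 2 / √π * ∫ y in 0..x, exp (-y ^ 2) := by
  have hhalf : ∫ y in Ioi (0 : ℝ), exp (-y ^ 2) = √π / 2 := by
    simpa using integral_gaussian_Ioi 1
  rw [erfc, ← intervalIntegral.integral_Ioi_sub_Ioi' integrable_exp_neg_sq.integrableOn
    integrable_exp_neg_sq.integrableOn, hhalf]
  field_simp
  ring

lemma erfc_zero : erfc 0 = 1 := by
  simp [erfc_eq_one_sub_intervalIntegral]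

lemma continuous_erfc : Continuous erfc := by
  simp_rw [funext erfc_eq_one_sub_intervalIntegral]
  exact continuous_const.sub (continuous_const.mul
    (intervalIntegral.continuous_primitive (fun _ _ => integrable_exp_neg_sq.intervalIntegrable) 0))

lemma erfc_nonneg (x : ℝ) : 0 ≤ erfc x :=
  mul_nonneg (by positivity) (setIntegral_nonneg measurableSet_Ioi fun _ _ => (exp_pos _).le)

lemma erfc_le_one {x : ℝ} (hx : 0 ≤ x) : erfc x ≤ 1 := by
  rw [erfc_eq_one_sub_intervalIntegral, sub_le_self_iff]
  exact mul_nonneg (by positivity)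
    (intervalIntegral.integral_nonneg hx fun _ _ => (exp_pos _).le)

lemma two_mul_integral_exp_neg_mul_sq (s t : ℝ) :
    2 * s * ∫ u in 0..t, exp (-(s * u) ^ 2) = √π * (1 - erfc (s * t)) := by
  rcases eq_or_ne s 0 with rfl | hs
  · simp [erfc_zero]
  rw [intervalIntegral.integral_comp_mul_left (fun y => exp (-y ^ 2)) hs,
    erfc_eq_one_sub_intervalIntegral, mul_zero, smul_eq_mul]
  field_simp
  ring

lemma integral_comp_sq_Ioi {E : Type*} [NormedAddCommGroup E] [NormedSpace ℝ E]
    (h : ℝ → E) : ∫ s in Ioi 0, (2 * s) • h (s ^ 2) = ∫ r in Ioi 0, h r := by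
  rw [← integral_comp_rpow_Ioi_of_pos (g := h) two_pos]
  refine setIntegral_congr_fun measurableSet_Ioi fun s _ => ?_
  norm_num

lemma integral_deriv_eq_sub_of_nonpos {φ : ℝ → ℝ} {a b : ℝ} (hab : a ≤ b)
    (hcont : ContinuousOn φ (Icc a b)) (hdiff : DifferentiableOn ℝ φ (Ioo a b))
    (hφ' : ∀ x ∈ Ioo a b, deriv φ x ≤ 0) :
    ∫ x in a..b, deriv φ x = φ b - φ a := by
  have hderiv : ∀ x ∈ Ioo a b, HasDerivAt φ (deriv φ x) x := fun x hx =>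
    (hdiff.differentiableAt (isOpen_Ioo.mem_nhds hx)).hasDerivAt
  have hint : IntervalIntegrable (-deriv φ) volume a b := by
    refine intervalIntegral.intervalIntegrable_deriv_of_nonneg (g := -φ) ?_ ?_ ?_
    · rw [uIcc_of_le hab]; exact hcont.neg
    · rw [min_eq_left hab, max_eq_right hab]; exact fun x hx => (hderiv x hx).neg
    · rw [min_eq_left hab, max_eq_right hab]; exact fun x hx => neg_nonneg.mpr (hφ' x hx)
  exact intervalIntegral.integral_eq_sub_of_hasDerivAt_of_le hab hcont hderiv
    (by simpa using hint.neg)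

lemma integrableOn_one_sub_erfc_mul {h : ℝ → ℝ} (hh : IntegrableOn h (Ioi 0)) {t : ℝ}
    (ht : 0 ≤ t) : IntegrableOn (fun s => (1 - erfc (s * t)) * h s) (Ioi 0) := by
  refine hh.bdd_mul (c := 1)
    ((continuous_const.sub (continuous_erfc.comp (continuous_mul_const t))).aestronglyMeasurable) ?_
  filter_upwards [ae_restrict_mem measurableSet_Ioi] with s hs
  have hst : 0 ≤ s * t := mul_nonneg (le_of_lt hs) ht
  rw [norm_eq_abs, abs_le]
  constructor <;> linarith [erfc_nonneg (s * t), erfc_le_one hst]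

lemma intervalIntegral_laplace_comp_sq {f : ℝ → ℝ} (hf : Measurable f)
    (hf_int : IntegrableOn (fun s => f (s ^ 2)) (Ioi 0)) {t : ℝ} (ht : 0 ≤ t) :
    ∫ u in 0..t, ∫ r in Ioi 0, exp (-r * u ^ 2) * f r
      = ∫ s in Ioi 0, (1 - erfc (s * t)) * (√π * f (s ^ 2)) := by
  set K : ℝ → ℝ → ℝ := fun s u => 2 * s * exp (-(s * u) ^ 2) * f (s ^ 2) with hK
  have hsub (u : ℝ) : ∫ r in Ioi 0, exp (-r * u ^ 2) * f r = ∫ s in Ioi 0, K s u := by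
    rw [← integral_comp_sq_Ioi]
    congr with s
    rw [hK, smul_eq_mul]
    ring_nf
  have hinner (c s : ℝ) :
      ∫ u in 0..t, 2 * s * exp (-(s * u) ^ 2) * c = (1 - erfc (s * t)) * (√π * c) := by
    rw [intervalIntegral.integral_mul_const, intervalIntegral.integral_const_mul,
      two_mul_integral_exp_neg_mul_sq]
    ring
  have hK_int : Integrable (fun p : ℝ × ℝ => K p.1 p.2)
      ((volume.restrict (Ioi 0)).prod (volume.restrict (Ioc 0 t))) := by
    rw [integrable_prod_iff (Measurable.aestronglyMeasurable (by fun_prop))]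
    refine ⟨.of_forall fun s => (by fun_prop : Continuous (K s)).integrableOn_Ioc, ?_⟩
    refine IntegrableOn.congr_fun ((integrableOn_one_sub_erfc_mul hf_int.norm ht).const_mul √π)
      (fun s hs => ?_) measurableSet_Ioi
    rw [mul_left_comm, ← hinner, intervalIntegral.integral_of_le ht]
    refine setIntegral_congr_fun measurableSet_Ioc fun u _ => ?_
    simp [hK, abs_of_pos (show (0 : ℝ) < s from hs)]
  simp_rw [hsub]
  rw [intervalIntegral.integral_of_le ht, ← integral_integral_swap hK_int]
  refine setIntegral_congr_fun measurableSet_Ioi fun s _ => ?_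
  rw [← intervalIntegral.integral_of_le ht, ← hinner]

theorem erfc_mixture_from_laplace_general (f : ℝ → ℝ) (hf_meas : Measurable f)
    (hf_nonneg : ∀ s, 0 < s → 0 ≤ f s)
    (hf_density : ∫ s in Set.Ioi (0:ℝ), Real.sqrt Real.pi * f (s ^ 2) = 1)
    (φ : ℝ → ℝ)
    (hφ_cont : ContinuousOn φ (Set.Ici 0))
    (hφ0 : φ 0 = 1)
    (hφ_diff : DifferentiableOn ℝ φ (Set.Ioi 0))
    (hφ_deriv : ∀ u : ℝ, 0 < u →
      -deriv φ u = ∫ r in Set.Ioi (0:ℝ), Real.exp (-r * u ^ 2) * f r) :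
    ∀ t : ℝ, 0 ≤ t →
      φ t = ∫ s in Set.Ioi (0:ℝ), erfc (s * t) * (Real.sqrt Real.pi * f (s ^ 2)) := by
  intro t ht
  have hg_int : IntegrableOn (fun s => √π * f (s ^ 2)) (Ioi 0) :=
    Integrable.of_integral_ne_zero (hf_density ▸ one_ne_zero)
  have hf_int : IntegrableOn (fun s => f (s ^ 2)) (Ioi 0) :=
    IntegrableOn.congr_fun (hg_int.const_mul (√π)⁻¹) (fun s _ => by field_simp) measurableSet_Ioi
  have hderiv_nonpos (u : ℝ) (hu : u ∈ Ioo 0 t) : deriv φ u ≤ 0 := by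
    rw [← neg_nonneg, hφ_deriv u hu.1]
    exact setIntegral_nonneg measurableSet_Ioi fun r hr =>
      mul_nonneg (exp_pos _).le (hf_nonneg r hr)
  have hFTC : ∫ u in 0..t, deriv φ u = φ t - φ 0 :=
    integral_deriv_eq_sub_of_nonpos ht (hφ_cont.mono Icc_subset_Ici_self)
      (hφ_diff.mono Ioo_subset_Ioi_self) hderiv_nonpos
  have hlaplace :
      ∫ u in 0..t, deriv φ u = -∫ u in 0..t, ∫ r in Ioi 0, exp (-r * u ^ 2) * f r := by
    rw [← intervalIntegral.integral_neg]
    refine intervalIntegral.integral_congr_ae (.of_forall fun u hu => ?_)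
    rw [uIoc_of_le ht] at hu
    rw [← hφ_deriv u hu.1, neg_neg]
  calc φ t = 1 - ∫ s in Ioi 0, (1 - erfc (s * t)) * (√π * f (s ^ 2)) := by
        rw [← intervalIntegral_laplace_comp_sq hf_meas hf_int ht]
        linarith
    _ = ∫ s in Ioi 0, erfc (s * t) * (√π * f (s ^ 2)) := by
        nth_rw 1 [← hf_density]
        rw [← integral_sub hg_int (integrableOn_one_sub_erfc_mul hg_int ht)]
        congr with s
        ring

/-- If `g(s) = √π f(s²)` is a probability density on `(0,∞)` and
`-φ'(u) = ∫₀^∞ e^{-r u²} f(r) dr` for `u > 0`, with `φ` continuous on `[0,∞)`,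
`φ(0) = 1` and `φ` taking values in `[0,1]`, then `φ` is the scale mixture of `erfc`
with mixing density `g`:  `φ(t) = ∫₀^∞ erfc(s t) √π f(s²) ds` for `t ≥ 0`. -/
theorem erfc_mixture_from_laplace (f : ℝ → ℝ) (hf_meas : Measurable f)
    (hf_nonneg : ∀ s, 0 < s → 0 ≤ f s)
    (hf_density : ∫ s in Set.Ioi (0:ℝ), Real.sqrt Real.pi * f (s ^ 2) = 1)
    (φ : ℝ → ℝ)
    (hφ_cont : ContinuousOn φ (Set.Ici 0))
    (hφ0 : φ 0 = 1)
    (hφ_mem : ∀ t, 0 ≤ t → φ t ∈ Set.Icc (0:ℝ) 1)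
    (hφ_diff : DifferentiableOn ℝ φ (Set.Ioi 0))
    (hφ_deriv : ∀ u : ℝ, 0 < u →
      -deriv φ u = ∫ r in Set.Ioi (0:ℝ), Real.exp (-r * u ^ 2) * f r) :
    ∀ t : ℝ, 0 ≤ t →
      φ t = ∫ s in Set.Ioi (0:ℝ), erfc (s * t) * (Real.sqrt Real.pi * f (s ^ 2)) :=
  erfc_mixture_from_laplace_general f hf_meas hf_nonneg hf_density φ hφ_cont hφ0 hφ_diff hφ_deriv
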